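/- arXiv:0901.0242 — 9 statements merged into one kernel-verified Lean document; each statement's English description precedes it below -/
import Mathlib

section
/- Let P = (Z,<) be a causal set such that I(x) is infinite for some x ∈ Z. Then P has a linear extension that does not have the order-type of ℕ. -/
/-!
Put every element that is not above `x` before every element above `x`: since `Set.Ici x` is an
up-set, this refines the order to a partial order, and any linear extension of it places the
infinitely many elements incomparable with `x` below `x`.
-/

namespace IsUpperSet

variable {α : Type*} [PartialOrder α] {U : Set α}

def refineBelow (U : Set α) (a b : α) : Prop :=
  a ≤ b ∨ (a ∉ U ∧ b ∈ U)

theorem isPartialOrder_refineBelow (hU : IsUpperSet U) : IsPartialOrder α (refineBelow U) where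
  refl a := Or.inl le_rfl
  trans a b c := by
    rintro (hab | ⟨ha, hb⟩) (hbc | ⟨hb', hc⟩)
    · exact Or.inl (hab.trans hbc)
    · exact Or.inr ⟨fun h => hb' (hU hab h), hc⟩
    · exact Or.inr ⟨ha, hU hbc hb⟩
    · exact absurd hb hb'
  antisymm a b := by
    rintro (hab | ⟨ha, hb⟩) (hba | ⟨hb', ha'⟩)
    · exact le_antisymm hab hba
    · exact absurd (hU hab ha') hb'
    · exact absurd (hU hba hb) ha
    · exact absurd hb hb'

theorem exists_linearExtension_compl_below (hU : IsUpperSet U) :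
    ∃ le' : α → α → Prop, IsLinearOrder α le' ∧ (∀ a b : α, a ≤ b → le' a b) ∧
      ∀ a ∉ U, ∀ b ∈ U, le' a b := by
  obtain ⟨le', hlin, hext⟩ := @extend_partialOrder α _ hU.isPartialOrder_refineBelow
  exact ⟨le', hlin, fun a b hab => hext a b (Or.inl hab),
    fun a ha b hb => hext a b (Or.inr ⟨ha, hb⟩)⟩

end IsUpperSet

theorem stmt2_general (Z : Type*) [PartialOrder Z]
    (x : Z) (hx : {y : Z | ¬ x ≤ y ∧ ¬ y ≤ x}.Infinite) :
    ∃ le' : Z → Z → Prop, IsLinearOrder Z le' ∧ (∀ a b : Z, a ≤ b → le' a b) ∧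
      ∃ z : Z, {y : Z | le' y z ∧ y ≠ z}.Infinite := by
  obtain ⟨le', hlin, hext, hbelow⟩ := (isUpperSet_Ici x).exists_linearExtension_compl_below
  refine ⟨le', hlin, hext, x, hx.mono fun y hy => ⟨hbelow y hy.1 x le_rfl, ?_⟩⟩
  rintro rfl
  exact hy.1 le_rfl

/-- If `P` is a causal set containing an element `x` incomparable with infinitely many
others, then `P` has a linear extension that does not have the order-type of `ℕ`:
some element has infinitely many elements strictly below it in the linear extension. -/
theorem stmt2 (Z : Type*) [PartialOrder Z] [Countable Z] [Infinite Z]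
    (hD : ∀ z : Z, {y : Z | y < z}.Finite)
    (x : Z) (hx : {y : Z | ¬ x ≤ y ∧ ¬ y ≤ x}.Infinite) :
    ∃ le' : Z → Z → Prop, IsLinearOrder Z le' ∧ (∀ a b : Z, a ≤ b → le' a b) ∧
      ∃ z : Z, {y : Z | le' y z ∧ y ≠ z}.Infinite :=
  stmt2_general Z x hx
end

section
/- Let P be a finite poset and let x be a maximal element of P with |P| = n. For 1 ≤ i ≤ n let L_i denote the set of linear extensions of P in which x appears in position i. Then |L_i| ≤ |L_{i+1}| for all 1 ≤ i < n; equivalently, the probability r_i(x) that x is in position i in a uniformly random linear extension of P is non-decreasing in i. -/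
/-!
Swapping the entries in positions `i` and `i + 1` of a linear extension with `x` in position `i`
gives a linear extension with `x` in position `i + 1`: the only order relation the swap could
violate is `x < l (i + 1)`, which fails because `x` is maximal. The swap is injective.
-/

/-- A linear extension of a finite poset `Z` with `n` elements, viewed as a bijection
from positions `Fin n` to `Z` whose inverse is order-preserving. -/
def IsLinExtEquiv {Z : Type*} [PartialOrder Z] {n : ℕ} (l : Fin n ≃ Z) : Prop :=
  ∀ i j : Fin n, l i < l j → i < j

open Equiv

theorem lt_of_swap_lt_swap_of_covBy {α : Type*} [LinearOrder α] {a b p q : α} (hab : a ⋖ b)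
    (h : swap a b p < swap a b q) (hpq : ¬(p = b ∧ q = a)) : p < q := by
  have hlt := hab.lt
  have hle : ∀ {c}, c < b → c ≤ a := hab.le_of_lt
  have hge : ∀ {c}, a < c → b ≤ c := hab.ge_of_gt
  rw [swap_apply_def, swap_apply_def] at h
  split_ifs at h <;> grind

theorem Equiv.trans_injective {α β : Type*} (e : α ≃ α) :
    Function.Injective (fun f : α ≃ β => e.trans f) :=
  fun f g h => Equiv.ext fun p => by simpa using DFunLike.congr_fun h (e.symm p)

theorem IsLinExtEquiv.swap_trans {Z : Type*} [PartialOrder Z] {n : ℕ} {l : Fin n ≃ Z}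
    (hl : IsLinExtEquiv l) {a b : Fin n} (hab : a ⋖ b) (hlab : ¬ l a < l b) :
    IsLinExtEquiv ((swap a b).trans l) := by
  intro p q hpq
  refine lt_of_swap_lt_swap_of_covBy hab (hl _ _ hpq) ?_
  rintro ⟨rfl, rfl⟩
  simp only [trans_apply, swap_apply_left, swap_apply_right] at hpq
  exact hlab hpq

/-- If `x` is a maximal element of a finite poset with `n` elements, then the number of
linear extensions with `x` in position `i` is at most the number with `x` in
position `i + 1`. -/
theorem stmt3 (Z : Type*) [PartialOrder Z] (n : ℕ)
    (x : Z) (hx : ∀ y : Z, ¬ x < y) (i : ℕ) (hi : i + 1 < n) :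
    Nat.card {l : Fin n ≃ Z // IsLinExtEquiv l ∧ l ⟨i, by omega⟩ = x} ≤
      Nat.card {l : Fin n ≃ Z // IsLinExtEquiv l ∧ l ⟨i + 1, hi⟩ = x} := by
  have hab : (⟨i, by omega⟩ : Fin n) ⋖ ⟨i + 1, hi⟩ :=
    Fin.covBy_iff.2 (Nat.covBy_iff_add_one_eq.2 rfl)
  refine Nat.card_le_card_of_injective
    (fun l => ⟨(swap _ _).trans l.1, l.2.1.swap_trans hab ?_, ?_⟩)
    fun l₁ l₂ h => Subtype.ext (trans_injective _ (congrArg Subtype.val h))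
  · rw [l.2.2]
    exact hx _
  · simpa using l.2.2
end

section
/- Let P be a finite poset with a maximal element x and |P| = n. Then for any 1 ≤ j ≤ n, the probability that x is in position j of a uniformly random linear extension of P is at most 1/(n - j + 1). -/
namespace Fin

lemma val_cycleIcc_of_ne {n : ℕ} {j k a : Fin n} (ha : a ≠ k) :
    (cycleIcc j k a : ℕ) = if j ≤ a ∧ a < k then (a : ℕ) + 1 else a := by
  have := a.neZero
  split_ifs with h
  · rw [cycleIcc_of_ge_of_lt h.1 h.2, val_add_one_of_lt' (by lia)]
  · rcases lt_or_ge a j with haj | hja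
    · rw [cycleIcc_of_lt haj]
    · rw [cycleIcc_of_gt (lt_of_le_of_ne (not_lt.mp fun hak => h ⟨hja, hak⟩) (Ne.symm ha))]

lemma lt_of_cycleIcc_lt_cycleIcc {n : ℕ} {j k a b : Fin n} (hjk : j ≤ k) (ha : a ≠ k)
    (h : cycleIcc j k a < cycleIcc j k b) : a < b := by
  have := a.neZero
  rw [lt_def, val_cycleIcc_of_ne ha] at h
  rcases eq_or_ne b k with rfl | hb
  · rw [cycleIcc_of_last hjk] at h
    rw [lt_def]; rw [le_def] at hjk
    split_ifs at h with h' <;> simp only [le_def, lt_def] at h' <;> omega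
  · rw [val_cycleIcc_of_ne hb] at h
    rw [lt_def]
    split_ifs at h with h₁ h₂ h₂ <;> simp only [le_def, lt_def] at h₁ h₂ <;> omega

end Fin

theorem IsLinExtEquiv.cycleIcc_trans {Z : Type*} [PartialOrder Z] {n : ℕ} {l : Fin n ≃ Z}
    (hl : IsLinExtEquiv l) {j k : Fin n} (hjk : j ≤ k) (hmax : ∀ y, ¬ l j < y) :
    IsLinExtEquiv ((Fin.cycleIcc j k).trans l) := by
  have := j.neZero
  intro a b hab
  rcases eq_or_ne a k with rfl | ha
  · rw [Equiv.trans_apply, Fin.cycleIcc_of_last hjk] at hab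
    exact absurd hab (hmax _)
  · exact Fin.lt_of_cycleIcc_lt_cycleIcc hjk ha (hl _ _ hab)

theorem stmt4_general (Z : Type*) [Fintype Z] [PartialOrder Z] (n : ℕ)
    (x : Z) (hx : ∀ y : Z, ¬ x < y) (j : Fin n) :
    Nat.card {l : Fin n ≃ Z // IsLinExtEquiv l ∧ l j = x} * (n - (j : ℕ)) ≤
      Nat.card {l : Fin n ≃ Z // IsLinExtEquiv l} := by
  classical
  have := j.neZero
  let moveTo (p : Finset.Ici j × {l : Fin n ≃ Z // IsLinExtEquiv l ∧ l j = x}) :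
      {l : Fin n ≃ Z // IsLinExtEquiv l} :=
    ⟨(Fin.cycleIcc j p.1).trans p.2.1,
      p.2.2.1.cycleIcc_trans (Finset.mem_Ici.mp p.1.2) (by rw [p.2.2.2]; exact hx)⟩
  have moveTo_self (p) : (moveTo p).1 p.1 = x := by
    simp [moveTo, Fin.cycleIcc_of_last (Finset.mem_Ici.mp p.1.2), p.2.2.2]
  have moveTo_injective : Function.Injective moveTo := by
    rintro ⟨k₁, l₁⟩ ⟨k₂, l₂⟩ h
    obtain rfl : k₁ = k₂ := Subtype.ext <| (moveTo (k₁, l₁)).1.injective <| by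
      rw [moveTo_self (k₁, l₁), h, moveTo_self (k₂, l₂)]
    obtain rfl : l₁ = l₂ := Subtype.ext <| Equiv.ext fun i => by
      simpa [moveTo] using congr($(congrArg Subtype.val h) ((Fin.cycleIcc j k₁).symm i))
    rfl
  have := Nat.card_le_card_of_injective moveTo moveTo_injective
  rwa [Nat.card_prod, Nat.card_eq_fintype_card (α := Finset.Ici j), Fintype.card_coe,
    Fin.card_Ici, mul_comm] at this

/-- If `x` is a maximal element of a finite poset with `n` elements, then the probability
that `x` is in position `j` (0-indexed; there are `n - j` positions from `j` on) of a
uniformly random linear extension is at most `1/(n - j)`, stated multiplicatively: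
`#{extensions with x at j} * (n - j) ≤ #{all extensions}`. -/
theorem stmt4 (Z : Type*) [Fintype Z] [PartialOrder Z] (n : ℕ) (hn : Fintype.card Z = n)
    (x : Z) (hx : ∀ y : Z, ¬ x < y) (j : Fin n) :
    Nat.card {l : Fin n ≃ Z // IsLinExtEquiv l ∧ l j = x} * (n - (j : ℕ)) ≤
      Nat.card {l : Fin n ≃ Z // IsLinExtEquiv l} :=
  stmt4_general Z n x hx j
end

section
/- Let P_n be the ladder poset on {a_1,...,a_n} with a_i < a_j iff j > i+1. The number of linear extensions of P_n in which a_1 is the bottom element equals F_{n-1}, and hence the proportion of linear extensions of P_n with bottom element a_1 is F_{n-1}/F_n, which converges to φ = (√5 − 1)/2 as n → ∞. -/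
/-!
In a linear extension of `P_(n+2)` either `a_1` comes first, and deleting it leaves an arbitrary
linear extension of `P_(n+1)`, or `a_2` comes first; then `a_1` must come second, since it lies
below every `a_j` with `j ≥ 3`, and deleting both leaves an arbitrary linear extension of `P_n`.
So `e(P_n)` satisfies the Fibonacci recursion, and the extensions of `P_(n+1)` starting with `a_1`
are counted by `e(P_n)`. The limit is the classical one for ratios of Fibonacci numbers, as
`-ψ = (√5 - 1) / 2`.
-/

/-- The strict order of the "ladder" poset on `{a_1, …, a_n}` (0-indexed as `Fin n`):
`a_p < a_q` iff `q ≥ p + 2`. -/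
def ladderLT (n : ℕ) (p q : Fin n) : Prop := (p : ℕ) + 2 ≤ (q : ℕ)

open Equiv Equiv.Perm

/-- `l i` is the element listed in position `i`. -/
def IsLadderExtension (n : ℕ) (l : Perm (Fin n)) : Prop :=
  ∀ i j : Fin n, ladderLT n (l i) (l j) → i < j

def ladderExtensions (n : ℕ) : Set (Perm (Fin n)) := {l | IsLadderExtension n l}

def permSucc {n : ℕ} (σ : Perm (Fin n)) : Perm (Fin (n + 1)) := decomposeFin.symm (0, σ)

section

variable {n : ℕ}

@[simp]
lemma ladderLT_succ_succ (p q : Fin n) : ladderLT (n + 1) p.succ q.succ ↔ ladderLT n p q := by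
  simp [ladderLT]

@[simp]
lemma not_ladderLT_zero (p : Fin (n + 1)) : ¬ ladderLT (n + 1) p 0 := by
  simp [ladderLT]

@[simp]
lemma not_ladderLT_one (p : Fin (n + 2)) : ¬ ladderLT (n + 2) p 1 := by
  simp [ladderLT]

@[simp]
lemma permSucc_apply_zero (σ : Perm (Fin n)) : permSucc σ 0 = 0 := by simp [permSucc]

@[simp]
lemma permSucc_apply_succ (σ : Perm (Fin n)) (x : Fin n) : permSucc σ x.succ = (σ x).succ := by
  simp [permSucc]

lemma permSucc_injective : Function.Injective (permSucc (n := n)) := fun _ _ h =>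
  (Prod.ext_iff.mp (decomposeFin.symm.injective h)).2

lemma exists_permSucc_eq {l : Perm (Fin (n + 1))} (h : l 0 = 0) : ∃ σ, permSucc σ = l := by
  obtain ⟨⟨p, σ⟩, rfl⟩ := decomposeFin.symm.surjective l
  rw [decomposeFin_symm_apply_zero] at h
  exact ⟨σ, h ▸ rfl⟩

lemma exists_swap_mul_permSucc_permSucc_eq {l : Perm (Fin (n + 2))} (h0 : l 0 = 1)
    (h1 : l 1 = 0) : ∃ σ, swap 0 1 * permSucc (permSucc σ) = l := by
  obtain ⟨τ, hτ⟩ := exists_permSucc_eq (l := swap 0 1 * l) (by simp [h0])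
  obtain ⟨σ, rfl⟩ := exists_permSucc_eq (l := τ) <| Fin.succ_injective _ <| by
    rw [← permSucc_apply_succ, hτ]
    simp [h1]
  exact ⟨σ, by rw [hτ, ← mul_assoc, swap_mul_self, one_mul]⟩

lemma isLadderExtension_permSucc (σ : Perm (Fin n)) :
    IsLadderExtension (n + 1) (permSucc σ) ↔ IsLadderExtension n σ := by
  simp [IsLadderExtension, Fin.forall_fin_succ, Fin.succ_pos]

lemma isLadderExtension_swap_mul_permSucc_permSucc (σ : Perm (Fin n)) :
    IsLadderExtension (n + 2) (swap 0 1 * permSucc (permSucc σ)) ↔ IsLadderExtension n σ := by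
  simp [IsLadderExtension, Fin.forall_fin_succ, Fin.succ_pos, swap_apply_of_ne_of_ne,
    Fin.succ_succ_ne_one]

lemma IsLadderExtension.apply_zero_eq_one_and_apply_one_eq_zero {l : Perm (Fin (n + 2))}
    (hl : IsLadderExtension (n + 2) l) (h0 : l 0 ≠ 0) : l 0 = 1 ∧ l 1 = 0 := by
  set k := l.symm 0
  have hk : l k = 0 := l.apply_symm_apply 0
  have hk0 : k ≠ 0 := fun h => h0 (h ▸ hk)
  have after_k : ∀ i, 2 ≤ (l i : ℕ) → k < i := fun i hi =>
    hl k i (by simp [ladderLT, hk, hi])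
  have h01 : l 0 ≠ l 1 := l.injective.ne (by simp)
  have hl0 : (l 0 : ℕ) < 2 := by
    by_contra h
    exact Fin.not_lt_zero _ (after_k 0 (by omega))
  have hl1 : (l 1 : ℕ) < 2 := by
    by_contra h
    have := after_k 1 (by omega)
    simp [Fin.lt_one_iff, hk0] at this
  simp only [Fin.ext_iff, ne_eq] at h0 h01 ⊢
  simp only [Fin.val_zero, Fin.val_one] at *
  omega

end

lemma image_permSucc_ladderExtensions (n : ℕ) :
    permSucc '' ladderExtensions n = ladderExtensions (n + 1) ∩ {l | l 0 = 0} := by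
  ext l
  constructor
  · rintro ⟨σ, hσ, rfl⟩
    exact ⟨(isLadderExtension_permSucc σ).2 hσ, permSucc_apply_zero σ⟩
  · rintro ⟨hl, h0⟩
    obtain ⟨σ, rfl⟩ := exists_permSucc_eq h0
    exact ⟨σ, (isLadderExtension_permSucc σ).1 hl, rfl⟩

lemma image_swap_mul_permSucc_permSucc_ladderExtensions (n : ℕ) :
    (fun σ => swap 0 1 * permSucc (permSucc σ)) '' ladderExtensions n =
      ladderExtensions (n + 2) \ {l | l 0 = 0} := by
  ext l
  constructor
  · rintro ⟨σ, hσ, rfl⟩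
    exact ⟨(isLadderExtension_swap_mul_permSucc_permSucc σ).2 hσ, by simp⟩
  · rintro ⟨hl, h0⟩
    obtain ⟨h0, h1⟩ := IsLadderExtension.apply_zero_eq_one_and_apply_one_eq_zero hl h0
    obtain ⟨σ, rfl⟩ := exists_swap_mul_permSucc_permSucc_eq h0 h1
    exact ⟨σ, (isLadderExtension_swap_mul_permSucc_permSucc σ).1 hl, rfl⟩

lemma ncard_ladderExtensions_add_two (n : ℕ) :
    (ladderExtensions (n + 2)).ncard =
      (ladderExtensions (n + 1)).ncard + (ladderExtensions n).ncard := by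
  have swap_mul_injective : Function.Injective
      (fun σ : Perm (Fin n) => swap 0 1 * permSucc (permSucc σ)) :=
    (mul_right_injective _).comp (permSucc_injective.comp permSucc_injective)
  rw [← Set.ncard_inter_add_ncard_sdiff_eq_ncard _ {l | l 0 = 0} (Set.toFinite _),
    ← image_permSucc_ladderExtensions, ← image_swap_mul_permSucc_permSucc_ladderExtensions,
    Set.ncard_image_of_injective _ permSucc_injective,
    Set.ncard_image_of_injective _ swap_mul_injective]

lemma ladderExtensions_eq_univ {n : ℕ} (hn : n ≤ 1) : ladderExtensions n = Set.univ :=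
  Set.eq_univ_of_forall fun l i j hij => by
    have := (l j).isLt
    simp only [ladderLT] at hij
    omega

lemma ncard_ladderExtensions (n : ℕ) : (ladderExtensions n).ncard = Nat.fib (n + 1) := by
  induction n using Nat.twoStepInduction with
  | zero => simp [ladderExtensions_eq_univ]
  | one => simp [ladderExtensions_eq_univ]
  | more n ih₀ ih₁ =>
    rw [ncard_ladderExtensions_add_two, ih₀, ih₁, Nat.fib_add_two (n := n + 1), add_comm]

/-- For the ladder poset on `n ≥ 1` elements: the number of linear extensions with
bottom element `a_1` equals `F_{n-1} = Nat.fib n`, and the proportion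
`F_{n-1}/F_n = Nat.fib n / Nat.fib (n+1)` converges to `φ = (√5 - 1)/2`. -/
theorem stmt6 :
    (∀ n : ℕ, ∀ hn : 1 ≤ n,
      Nat.card {l : Equiv.Perm (Fin n) //
        (∀ i j : Fin n, ladderLT n (l i) (l j) → i < j) ∧
          l ⟨0, by omega⟩ = ⟨0, by omega⟩} = Nat.fib n) ∧
    Filter.Tendsto (fun n : ℕ => (Nat.fib n : ℝ) / Nat.fib (n + 1)) Filter.atTop
      (nhds ((Real.sqrt 5 - 1) / 2)) := by
  refine ⟨fun n hn => ?_, ?_⟩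
  · obtain ⟨m, rfl⟩ := Nat.exists_eq_add_of_le' hn
    change Nat.card ↥(ladderExtensions (m + 1) ∩ {l | l 0 = 0}) = _
    rw [Nat.card_coe_set_eq, ← image_permSucc_ladderExtensions,
      Set.ncard_image_of_injective _ permSucc_injective, ncard_ladderExtensions]
  · convert tendsto_fib_div_fib_succ_atTop using 2
    simp only [Real.goldenConj]
    ring
end

section
/- Let T = (Z,<) be a downward-branching forest (every element has exactly one upper cover is not required; rather, for each x, the up-set U[x] is a chain), let C: x_0 < x_1 < ⋯ be a maximal chain, and for i ≥ 1 set B_i = D(x_i), A_i = D(x_i) ∖ D[x_{i-1}], a_i = |A_i|, b_i = |B_i|, t_i = a_i/b_i. Then in a uniformly random linear extension of the finite poset T restricted to D[x_j], the probability that x_0 is the bottom element equals the product over i = 1,...,j of (1 − t_i). -/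
/-!
A linear extension of `D[x (j+1)]` is a linear extension of `D(x (j+1))` followed by `x (j+1)`,
and since `D(x (j+1))` is the disjoint union of the mutually incomparable sets `A = A_(j+1)` and
`S = D[x j]`, it is a riffle shuffle of a linear extension of `A` and one of `S`: there are
`C(a + s, a) e(A) e(S)` of them, where `e` counts linear extensions. Those starting with `x 0`
are the shuffles of `A` with a linear extension of `S` starting with `x 0`, i.e. with one of
`S \ {x 0}`, and there are `C(a + s - 1, a) e(A) e(S \ {x 0})` of them. The ratio
`C(a + s - 1, a) / C(a + s, a) = s / (a + s) = 1 - t_(j+1)` gives the induction step.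
-/

/-- A linear extension of the restriction of a poset to a set `S`, as a list: the list is
duplicate-free, its entries are exactly the elements of `S`, and no earlier entry lies
strictly above a later one. -/
def IsLinExtOn {Z : Type*} [PartialOrder Z] (S : Set Z) (l : List Z) : Prop :=
  l.Nodup ∧ (∀ z : Z, z ∈ l ↔ z ∈ S) ∧ l.Pairwise fun a b => ¬ b < a

namespace List

variable {α : Type*}

def riffle : List Bool → List α → List α → List α
  | true :: m, a :: l₁, l₂ => a :: riffle m l₁ l₂
  | false :: m, l₁, b :: l₂ => b :: riffle m l₁ l₂
  | _, _, _ => []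

theorem riffle_map_filter (p : α → Bool) (l : List α) :
    riffle (l.map p) (l.filter p) (l.filter (!p ·)) = l := by
  induction l with
  | nil => rfl
  | cons a l ih => cases h : p a <;> simp [h, riffle, ih]

theorem map_filter_riffle (p : α → Bool) {m : List Bool} {l₁ l₂ : List α}
    (h₁ : m.count true = l₁.length) (h₂ : m.count false = l₂.length)
    (hp₁ : ∀ a ∈ l₁, p a) (hp₂ : ∀ b ∈ l₂, p b = false) :
    (riffle m l₁ l₂).map p = m ∧ (riffle m l₁ l₂).filter p = l₁ ∧
      (riffle m l₁ l₂).filter (!p ·) = l₂ := by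
  induction m generalizing l₁ l₂ with
  | nil => simp_all [riffle, eq_comm (a := 0)]
  | cons b m ih =>
    cases b
    · obtain _ | ⟨c, l₂⟩ := l₂
      · simp at h₂
      · simp_all [riffle]
    · obtain _ | ⟨c, l₁⟩ := l₁
      · simp at h₁
      · simp_all [riffle]

theorem count_true_map (p : α → Bool) (l : List α) :
    (l.map p).count true = (l.filter p).length := by
  simp [count_eq_countP, countP_eq_length_filter, filter_map, Function.comp_def]

theorem Pairwise.of_filter (p : α → Bool) {R : α → α → Prop} {l : List α}
    (hR : ∀ a ∈ l, ∀ b ∈ l, p a ≠ p b → R a b)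
    (h₁ : (l.filter p).Pairwise R) (h₂ : (l.filter (!p ·)).Pairwise R) : l.Pairwise R := by
  induction l with
  | nil => exact .nil
  | cons a l ih =>
    cases h : p a <;> simp_all [pairwise_cons]
    all_goals exact fun b hb => by cases hb' : p b <;> simp_all

theorem card_length_count_true (n k : ℕ) :
    Nat.card {m : List Bool // m.length = n ∧ m.count true = k} = n.choose k := by
  induction n generalizing k with
  | zero =>
    cases k
    · exact Nat.card_eq_one_iff_exists.2
        ⟨⟨[], by simp⟩, fun ⟨_, hm⟩ => Subtype.ext (length_eq_zero_iff.1 hm.1)⟩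
    · rw [Nat.choose_zero_succ, Nat.card_eq_zero]
      exact .inl ⟨fun ⟨_, h₁, h₂⟩ => by simp [length_eq_zero_iff.1 h₁] at h₂⟩
  | succ n ih =>
    cases k with
    | zero =>
      rw [Nat.choose_zero_right, Nat.card_eq_one_iff_exists]
      refine ⟨⟨replicate (n + 1) false, by simp [count_replicate]⟩, fun ⟨m, hm⟩ => Subtype.ext ?_⟩
      simpa [eq_replicate_iff, count_eq_zero] using hm
    | succ k =>
      have (k : ℕ) : Finite {m : List Bool // m.length = n ∧ m.count true = k} :=
        ((finite_length_eq Bool n).subset fun _ hm => hm.1).to_subtype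
      rw [Nat.choose_succ_succ', ← ih, ← ih, ← Nat.card_sum]
      refine (Nat.card_congr (Equiv.ofBijective (Sum.elim (fun m => ⟨true :: m.1, by simp [m.2]⟩)
        (fun m => ⟨false :: m.1, by simp [m.2]⟩)) ⟨?_, ?_⟩)).symm
      · rintro (⟨m, hm⟩ | ⟨m, hm⟩) (⟨m', hm'⟩ | ⟨m', hm'⟩) h <;> simp_all
      · rintro ⟨_ | ⟨_ | _, m⟩, hm⟩
        · simp at hm
        · exact ⟨.inr ⟨m, by simpa using hm⟩, rfl⟩
        · exact ⟨.inl ⟨m, by simpa using hm⟩, rfl⟩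

end List

section LinearExtension

variable {Z : Type*} [PartialOrder Z] {S A B : Set Z} {l : List Z} {m t : Z}

theorem incompRel_of_covBy (hchain : ∀ a : Z, IsChain (· ≤ ·) {y : Z | a ≤ y}) {b c p q : Z}
    (hbc : b ⋖ c) (hpc : p < c) (hpb : ¬ p ≤ b) (hqb : q ≤ b) : IncompRel (· ≤ ·) p q := by
  refine ⟨fun hpq => hpb (hpq.trans hqb), fun hqp => ?_⟩
  rcases hchain q hqp hqb (fun h => hpb h.le) with h | h
  exacts [hpb h, hbc.2 (h.lt_of_not_ge hpb) hpc]

theorem IsLinExtOn.length_eq_ncard (h : IsLinExtOn S l) : l.length = S.ncard := by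
  classical
  rw [← List.toFinset_card_of_nodup h.1, ← Set.ncard_coe_finset]
  congr
  ext z
  simp [h.2.1 z]

theorem IsLinExtOn.filter (h : IsLinExtOn S l) (p : Z → Bool) :
    IsLinExtOn {z ∈ S | p z} (l.filter p) :=
  ⟨h.1.filter p, fun z => by simp [h.2.1 z], h.2.2.filter p⟩

theorem isLinExtOn_cons_iff (hm : m ∈ S) (hmin : ∀ z ∈ S, ¬ z < m) :
    IsLinExtOn S (m :: l) ↔ IsLinExtOn (S \ {m}) l := by
  simp only [IsLinExtOn, List.nodup_cons, List.pairwise_cons, List.mem_cons, Set.mem_sdiff,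
    Set.mem_singleton_iff]
  grind

theorem isLinExtOn_concat_iff (hm : m ∈ S) (hmax : ∀ z ∈ S, ¬ m < z) :
    IsLinExtOn S (l ++ [m]) ↔ IsLinExtOn (S \ {m}) l := by
  simp only [IsLinExtOn, List.nodup_append, List.pairwise_append, List.mem_append,
    List.mem_singleton, Set.mem_sdiff, Set.mem_singleton_iff, List.nodup_singleton,
    List.pairwise_singleton]
  grind

theorem isLinExtOn_union_iff (p : Z → Bool) (hA : ∀ a ∈ A, p a) (hB : ∀ b ∈ B, p b = false)
    (hAB : ∀ a ∈ A, ∀ b ∈ B, IncompRel (· < ·) a b) :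
    IsLinExtOn (A ∪ B) l ↔ IsLinExtOn A (l.filter p) ∧ IsLinExtOn B (l.filter (!p ·)) := by
  constructor
  · intro h
    constructor <;> convert h.filter _ using 1 <;> ext z <;> grind
  · rintro ⟨h₁, h₂⟩
    have hmem (z : Z) : z ∈ l ↔ z ∈ A ∪ B := by
      have := h₁.2.1 z
      have := h₂.2.1 z
      simp only [List.mem_filter] at *
      grind
    refine ⟨(List.filter_append_perm p l).nodup_iff.1 (List.nodup_append.2 ⟨h₁.1, h₂.1, ?_⟩),
      hmem, List.Pairwise.of_filter p ?_ h₁.2.2 h₂.2.2⟩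
    · grind
    · grind [IncompRel]

/-- A linear extension of `A ∪ B` is determined by the mask of positions of the elements of `A`
and by its restrictions to `A` and to `B`, which may be chosen freely. -/
theorem card_isLinExtOn_union (hAB : ∀ a ∈ A, ∀ b ∈ B, IncompRel (· ≤ ·) a b) :
    Nat.card {l // IsLinExtOn (A ∪ B) l} = (A.ncard + B.ncard).choose A.ncard *
      Nat.card {l // IsLinExtOn A l} * Nat.card {l // IsLinExtOn B l} := by
  classical
  let p : Z → Bool := fun z => decide (z ∈ A)
  have hA : ∀ a ∈ A, p a := fun a ha => decide_eq_true ha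
  have hB : ∀ b ∈ B, p b = false :=
    fun b hb => decide_eq_false fun hbA => (hAB b hbA b hb).1 le_rfl
  have hunion (l : List Z) := isLinExtOn_union_iff (l := l) p hA hB
    fun a ha b hb => ⟨fun h => (hAB a ha b hb).1 h.le, fun h => (hAB a ha b hb).2 h.le⟩
  have hriffle {m : List Bool} {l₁ l₂ : List Z}
      (hm : m.length = A.ncard + B.ncard ∧ m.count true = A.ncard)
      (h₁ : IsLinExtOn A l₁) (h₂ : IsLinExtOn B l₂) :=
    List.map_filter_riffle p (by rw [hm.2, h₁.length_eq_ncard])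
      (by have := m.count_true_add_count_false; rw [h₂.length_eq_ncard]; omega)
      (fun a ha => hA a ((h₁.2.1 a).1 ha)) (fun b hb => hB b ((h₂.2.1 b).1 hb))
  let e : {l // IsLinExtOn (A ∪ B) l} ≃
      {m : List Bool // m.length = A.ncard + B.ncard ∧ m.count true = A.ncard} ×
        {l // IsLinExtOn A l} × {l // IsLinExtOn B l} :=
    { toFun l :=
        have h := (hunion _).1 l.2
        (⟨l.1.map p, by rw [List.length_map, l.1.length_eq_length_filter_add p,
            h.1.length_eq_ncard, h.2.length_eq_ncard],
          by rw [List.count_true_map, h.1.length_eq_ncard]⟩, ⟨_, h.1⟩, ⟨_, h.2⟩)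
      invFun t := ⟨List.riffle t.1 t.2.1 t.2.2, (hunion _).2 (by
        rw [(hriffle t.1.2 t.2.1.2 t.2.2.2).2.1, (hriffle t.1.2 t.2.1.2 t.2.2.2).2.2]
        exact ⟨t.2.1.2, t.2.2.2⟩)⟩
      left_inv l := Subtype.ext (List.riffle_map_filter p l)
      right_inv t := by
        obtain ⟨h₀, h₁, h₂⟩ := hriffle t.1.2 t.2.1.2 t.2.2.2
        exact Prod.ext (Subtype.ext h₀) (Prod.ext (Subtype.ext h₁) (Subtype.ext h₂)) }
  rw [Nat.card_congr e, Nat.card_prod, Nat.card_prod, List.card_length_count_true, mul_assoc]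

theorem card_isLinExtOn_head?_eq (hm : m ∈ S) (hmin : ∀ z ∈ S, ¬ z < m) :
    Nat.card {l // IsLinExtOn S l ∧ l.head? = some m} =
      Nat.card {l // IsLinExtOn (S \ {m}) l} := by
  refine (Nat.card_eq_of_bijective
    (fun l => ⟨m :: l.1, (isLinExtOn_cons_iff hm hmin).2 l.2, rfl⟩)
    ⟨fun l₁ l₂ h => Subtype.ext (List.cons_injective (congrArg Subtype.val h)), ?_⟩).symm
  rintro ⟨_ | ⟨a, l⟩, h, hhead⟩
  · cases hhead
  · obtain rfl : a = m := Option.some_injective _ hhead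
    exact ⟨⟨l, (isLinExtOn_cons_iff hm hmin).1 h⟩, rfl⟩

theorem card_isLinExtOn_insert_of_forall_lt (ht : ∀ z ∈ S, z < t) :
    Nat.card {l // IsLinExtOn (insert t S) l} = Nat.card {l // IsLinExtOn S l} := by
  have htS : t ∉ S := fun h => lt_irrefl t (ht t h)
  have hiff (l : List Z) : IsLinExtOn (insert t S) (l ++ [t]) ↔ IsLinExtOn S l := by
    rw [isLinExtOn_concat_iff (Set.mem_insert t S), Set.insert_sdiff_self_of_notMem htS]
    rintro z (rfl | hz)
    exacts [lt_irrefl z, (ht z hz).not_gt]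
  refine (Nat.card_eq_of_bijective (fun l => ⟨l.1 ++ [t], (hiff l.1).2 l.2⟩)
    ⟨fun l₁ l₂ h => Subtype.ext (List.append_cancel_right (congrArg Subtype.val h)), ?_⟩).symm
  rintro ⟨l, hl⟩
  obtain ⟨l₁, _ | ⟨z, l₂⟩, rfl⟩ := List.append_of_mem ((hl.2.1 t).2 (Set.mem_insert t S))
  · exact ⟨⟨l₁, (hiff l₁).1 hl⟩, rfl⟩
  · have hz := hl.2.1 z
    simp only [IsLinExtOn, List.nodup_append, List.pairwise_append, List.pairwise_cons] at hl
    grind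

theorem card_isLinExtOn_insert_union_sdiff {r : ℝ}
    (hAS : ∀ a ∈ A, ∀ b ∈ S, IncompRel (· ≤ ·) a b) (hA : A.Finite) (hS : S.Finite) (hm : m ∈ S)
    (ht : ∀ z ∈ A ∪ S, z < t)
    (hr : (Nat.card {l // IsLinExtOn (S \ {m}) l} : ℝ) = r * Nat.card {l // IsLinExtOn S l}) :
    (Nat.card {l // IsLinExtOn (insert t (A ∪ S) \ {m}) l} : ℝ) =
      (1 - A.ncard / (A ∪ S).ncard) * r * Nat.card {l // IsLinExtOn (insert t (A ∪ S)) l} := by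
  have hmA : m ∉ A := fun h => (hAS m h m hm).1 le_rfl
  have hdisj : Disjoint A S := Set.disjoint_left.2 fun z hzA hzS => (hAS z hzA z hzS).1 le_rfl
  rw [← Set.insert_sdiff_singleton_comm (ht m (.inr hm)).ne', Set.union_sdiff_distrib,
    Set.sdiff_singleton_eq_self hmA]
  rw [card_isLinExtOn_insert_of_forall_lt fun z hz => ht z (hz.imp_right fun h => h.1),
    card_isLinExtOn_insert_of_forall_lt ht,
    card_isLinExtOn_union fun a ha b hb => hAS a ha b hb.1, card_isLinExtOn_union hAS]
  rw [Set.ncard_union_eq hdisj hA hS, ← Set.ncard_sdiff_singleton_add_one hm hS]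
  set a := A.ncard
  set c := (S \ {m}).ncard
  have hchoose : ((a + c).choose a * (a + c + 1) : ℝ) = (a + c + 1).choose a * (c + 1) := by
    exact_mod_cast (Nat.choose_mul_succ_eq (a + c) a).trans
      (by rw [show a + c + 1 - a = c + 1 by omega])
  push_cast
  rw [hr]
  field_simp
  linear_combination
    (r * Nat.card {l // IsLinExtOn A l} * Nat.card {l // IsLinExtOn S l}) * hchoose

theorem card_isLinExtOn_Iic_sdiff_of_covBy
    (hchain : ∀ a : Z, IsChain (· ≤ ·) {y : Z | a ≤ y}) {b c : Z} {r : ℝ}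
    (hfin : (Set.Iio c).Finite) (hbc : b ⋖ c) (hm : m ≤ b)
    (hr : (Nat.card {l // IsLinExtOn (Set.Iic b \ {m}) l} : ℝ) =
      r * Nat.card {l // IsLinExtOn (Set.Iic b) l}) :
    (Nat.card {l // IsLinExtOn (Set.Iic c \ {m}) l} : ℝ) =
      (1 - ({y | y < c ∧ ¬ y ≤ b}.ncard : ℝ) / (Set.Iio c).ncard) * r *
        Nat.card {l // IsLinExtOn (Set.Iic c) l} := by
  have hsplit : Set.Iio c = {y | y < c ∧ ¬ y ≤ b} ∪ Set.Iic b := by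
    ext y
    simp only [Set.mem_Iio, Set.mem_union, Set.mem_ofPred_eq, Set.mem_Iic]
    have := hbc.lt
    grind [lt_of_le_of_lt]
  rw [← Set.Iio_insert, hsplit]
  exact card_isLinExtOn_insert_union_sdiff
    (fun p hp q hq => incompRel_of_covBy hchain hbc hp.1 hp.2 hq) (hfin.subset fun y hy => hy.1)
    (hfin.subset fun y hy => hy.trans_lt hbc.lt) hm (fun z hz => (hsplit ▸ hz : z ∈ Set.Iio c)) hr

end LinearExtension

theorem stmt9_general (Z : Type*) [PartialOrder Z]
    (hD : ∀ z : Z, {y : Z | y < z}.Finite)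
    (hforest : ∀ a : Z, IsChain (· ≤ ·) {y : Z | a ≤ y})
    (x : ℕ → Z) (hmono : StrictMono x) (hmin : ∀ y : Z, ¬ y < x 0)
    (hmax : {y : Z | x 0 ≤ y} = Set.range x) (j : ℕ) :
    (Nat.card {l : List Z // IsLinExtOn {y : Z | y ≤ x j} l ∧ l.head? = some (x 0)} : ℝ) =
      (∏ i ∈ Finset.Icc 1 j,
        (1 - ({y : Z | y < x i ∧ ¬ y ≤ x (i - 1)}.ncard : ℝ) / {y : Z | y < x i}.ncard)) *
        Nat.card {l : List Z // IsLinExtOn {y : Z | y ≤ x j} l} := by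
  have hcov (i : ℕ) : x i ⋖ x (i + 1) := (Order.covBy_add_one i).image
    (OrderEmbedding.ofStrictMono x hmono) (hmax ▸ Set.ordConnected_Ici)
  simp only [Set.Iic_def, Set.Iio_def]
  rw [card_isLinExtOn_head?_eq (Set.mem_Iic.2 (hmono.monotone j.zero_le)) fun z _ => hmin z]
  induction j with
  | zero =>
    rw [Finset.Icc_eq_empty (by omega), Finset.prod_empty, one_mul, Set.Iic_sdiff_right,
      ← Set.Iio_insert, card_isLinExtOn_insert_of_forall_lt (S := Set.Iio (x 0)) fun _ => id]
  | succ j ih =>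
    rw [Finset.prod_Icc_succ_top (by omega), Nat.add_sub_cancel,
      card_isLinExtOn_Iic_sdiff_of_covBy hforest (hD _) (hcov j) (hmono.monotone j.zero_le) ih]
    ring

/-- For a downward-branching tree `T` (a causal set where every up-set `U[x]` is a chain
and every two elements have a common upper bound), with maximal chain
`C : x 0 < x 1 < ⋯` starting at a minimal element `x 0` (so `U[x 0] = range x`), the
probability that `x 0` is the bottom element of a uniformly random linear extension of the
restriction of `T` to `D[x j]` equals `∏_{i=1}^{j} (1 - t_i)`, where
`t_i = |A_i| / |B_i|`, `B_i = D(x i)` and `A_i = D(x i) \ D[x (i-1)]`. -/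
theorem stmt9 (Z : Type*) [PartialOrder Z] [Countable Z] [Infinite Z]
    (hD : ∀ z : Z, {y : Z | y < z}.Finite)
    (hforest : ∀ a : Z, IsChain (· ≤ ·) {y : Z | a ≤ y})
    (htree : ∀ a b : Z, ∃ c : Z, a ≤ c ∧ b ≤ c)
    (x : ℕ → Z) (hmono : StrictMono x) (hmin : ∀ y : Z, ¬ y < x 0)
    (hmax : {y : Z | x 0 ≤ y} = Set.range x) (j : ℕ) :
    (Nat.card {l : List Z // IsLinExtOn {y : Z | y ≤ x j} l ∧ l.head? = some (x 0)} : ℝ) =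
      (∏ i ∈ Finset.Icc 1 j,
        (1 - ({y : Z | y < x i ∧ ¬ y ≤ x (i - 1)}.ncard : ℝ) / {y : Z | y < x i}.ncard)) *
        Nat.card {l : List Z // IsLinExtOn {y : Z | y ≤ x j} l} :=
  stmt9_general Z hD hforest x hmono hmin hmax j
end

section
/- Let P = (Z,<) be a causal set such that I(x) is finite for every x ∈ Z. Then P has no proper infinite down-set: every infinite down-set of P equals Z. -/
/-! An element `x` fails to lie below `y` only when `y < x` or `y` is incomparable with `x`, so
finitely many `y` do. An infinite down-set therefore contains some `y ≥ x`, and with it `x`. -/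

theorem Set.Finite.setOf_not_le {α : Type*} [Preorder α] {x : α} (hD : {y | y < x}.Finite)
    (hI : {y | ¬ x ≤ y ∧ ¬ y ≤ x}.Finite) : {y | ¬ x ≤ y}.Finite := by
  refine (hD.union hI).subset fun y hxy => ?_
  by_cases hyx : y ≤ x
  · exact Or.inl (lt_of_le_not_ge hyx hxy)
  · exact Or.inr ⟨hxy, hyx⟩

theorem IsLowerSet.mem_of_infinite {α : Type*} [Preorder α] {Y : Set α} {x : α}
    (hY : IsLowerSet Y) (hinf : Y.Infinite) (hx : {y | ¬ x ≤ y}.Finite) : x ∈ Y := by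
  obtain ⟨y, hyY, hxy⟩ := (hinf.sdiff hx).nonempty
  exact hY (not_not.mp hxy) hyY

theorem stmt12_general (Z : Type*) [PartialOrder Z]
    (hD : ∀ z : Z, {y : Z | y < z}.Finite)
    (hI : ∀ x : Z, {y : Z | ¬ x ≤ y ∧ ¬ y ≤ x}.Finite) :
    ∀ Y : Set Z, IsLowerSet Y → Y.Infinite → Y = Set.univ :=
  fun _ hY hinf => Set.eq_univ_of_forall fun x =>
    hY.mem_of_infinite hinf ((hD x).setOf_not_le (hI x))

/-- If `P` is a causal set in which every element is incomparable with only finitely many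
others, then every infinite down-set of `P` equals all of `P`. -/
theorem stmt12 (Z : Type*) [PartialOrder Z] [Countable Z] [Infinite Z]
    (hD : ∀ z : Z, {y : Z | y < z}.Finite)
    (hI : ∀ x : Z, {y : Z | ¬ x ≤ y ∧ ¬ y ≤ x}.Finite) :
    ∀ Y : Set Z, IsLowerSet Y → Y.Infinite → Y = Set.univ :=
  stmt12_general Z hD hI
end

section
/- Let P = (Z,<) be a causal set such that for every finite down-set A, the poset P ∖ A has only finitely many minimal elements. Then the space Ω^P of infinite sequences x_1 x_2 ⋯ of distinct elements of Z, in which each x_k is a minimal element of P ∖ {x_1,...,x_{k−1}}, equipped with the metric d(x_1x_2⋯, y_1y_2⋯) = ∑_i 2^{−i} 𝟙(x_i ≠ y_i), is compact (equivalently sequentially compact). -/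
open scoped Classical

/-- Membership in `Ω^P`: an injective sequence in which each entry is minimal among the
elements not yet listed (everything strictly below an entry appears earlier). -/
def MemOmegaP {Z : Type*} [PartialOrder Z] (ω : ℕ → Z) : Prop :=
  Function.Injective ω ∧ ∀ k : ℕ, ∀ y : Z, y < ω k → ∃ j < k, ω j = y

/-- The metric `d(x, y) = ∑_{i≥1} 2^{-i} 𝟙(x_i ≠ y_i)` on sequences (0-indexed). -/
noncomputable def seqDist {Z : Type*} (ω ω' : ℕ → Z) : ℝ :=
  ∑' i : ℕ, (2 : ℝ)⁻¹ ^ (i + 1) * (if ω i = ω' i then 0 else 1)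

/-!
The `k`-th entry of any `ω ∈ Ω^P` is a minimal element of the complement of the finite down-set
`{ω 0, …, ω (k-1)}`. By induction on `k`, the hypothesis on minimal elements therefore leaves only
finitely many possible prefixes of length `k`, hence finitely many possible values of `ω k`.
A sequence in `Ω^P` thus lives in a product of finite sets, and Tychonoff gives a subsequence
that converges coordinatewise, i.e. whose coordinates are eventually constant. Being in `Ω^P` is a
condition on finite prefixes, so the limit is in `Ω^P`, and agreement on the first `m`
coordinates means distance at most `2⁻ᵐ`.
-/

open Set Filter Topology

section Prefixes

variable {Z : Type*} [PartialOrder Z]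

def minimalOutside (A : Set Z) : Set Z := {b | b ∉ A ∧ ∀ y ∉ A, ¬ y < b}

theorem MemOmegaP.isLowerSet_image_Iio {ω : ℕ → Z} (hω : MemOmegaP ω) (k : ℕ) :
    IsLowerSet (ω '' Iio k) := by
  rintro _ y hy ⟨j, hj, rfl⟩
  obtain rfl | hlt := hy.eq_or_lt
  · exact ⟨j, hj, rfl⟩
  · obtain ⟨i, hij, rfl⟩ := hω.2 j y hlt
    exact ⟨i, hij.trans hj, rfl⟩

theorem MemOmegaP.apply_mem_minimalOutside {ω : ℕ → Z} (hω : MemOmegaP ω) (k : ℕ) :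
    ω k ∈ minimalOutside (ω '' Iio k) := by
  refine ⟨?_, fun y hy hlt => hy ?_⟩
  · rintro ⟨j, hj, hjk⟩
    exact (hω.1 hjk).not_lt hj
  · obtain ⟨j, hj, rfl⟩ := hω.2 k y hlt
    exact ⟨j, hj, rfl⟩

def prefixSets (Z : Type*) [PartialOrder Z] (k : ℕ) : Set (Set Z) :=
  (fun ω : ℕ → Z => ω '' Iio k) '' {ω | MemOmegaP ω}

variable (hmin : ∀ A : Set Z, IsLowerSet A → A.Finite → (minimalOutside A).Finite)
include hmin

theorem finite_minimalOutside_of_mem_prefixSets {k : ℕ} {A : Set Z} (hA : A ∈ prefixSets Z k) :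
    (minimalOutside A).Finite := by
  obtain ⟨ω, hω, rfl⟩ := hA
  exact hmin _ (hω.isLowerSet_image_Iio k) ((finite_Iio k).image ω)

theorem finite_prefixSets (k : ℕ) : (prefixSets Z k).Finite := by
  induction k with
  | zero => exact (finite_singleton ∅).subset (by rintro _ ⟨ω, -, rfl⟩; simp)
  | succ k ih =>
    refine (ih.biUnion fun A hA =>
      (finite_minimalOutside_of_mem_prefixSets hmin hA).image (insert · A)).subset ?_
    rintro _ ⟨ω, hω, rfl⟩
    refine mem_biUnion ⟨ω, hω, rfl⟩ ⟨ω k, hω.apply_mem_minimalOutside k, ?_⟩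
    simp only [Iio_add_one_eq_Iic, ← Iio_insert, image_insert_eq]

theorem finite_values (k : ℕ) : ((fun ω : ℕ → Z => ω k) '' {ω | MemOmegaP ω}).Finite := by
  refine ((finite_prefixSets hmin k).biUnion fun A hA =>
    finite_minimalOutside_of_mem_prefixSets hmin hA).subset ?_
  rintro _ ⟨ω, hω, rfl⟩
  exact mem_biUnion ⟨ω, hω, rfl⟩ (hω.apply_mem_minimalOutside k)

end Prefixes

theorem exists_subseq_eventually_eq {Z : Type*} {C : ℕ → Set Z} (hC : ∀ k, (C k).Finite)
    (v : ℕ → ℕ → Z) (hv : ∀ n k, v n k ∈ C k) :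
    ∃ ω : ℕ → Z, ∃ φ : ℕ → ℕ, StrictMono φ ∧ ∀ k, ∀ᶠ n in atTop, v (φ n) k = ω k := by
  let : TopologicalSpace Z := ⊥
  have : DiscreteTopology Z := ⟨rfl⟩
  have hK : IsCompact (univ.pi C) := isCompact_univ_pi fun k => (hC k).isCompact
  obtain ⟨ω, -, φ, hφ, hlim⟩ := hK.tendsto_subseq fun n => mem_univ_pi.2 (hv n)
  refine ⟨ω, φ, hφ, fun k => ?_⟩
  have hk := tendsto_pi_nhds.1 hlim k
  rwa [nhds_discrete, tendsto_pure] at hk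

theorem memOmegaP_of_eventually_eq {Z : Type*} [PartialOrder Z] {ι : Type*} {l : Filter ι}
    [l.NeBot] {v : ι → ℕ → Z} (hv : ∀ n, MemOmegaP (v n)) {ω : ℕ → Z}
    (hlim : ∀ k, ∀ᶠ n in l, v n k = ω k) : MemOmegaP ω := by
  refine ⟨fun i j hij => ?_, fun k y hy => ?_⟩
  · obtain ⟨n, hni, hnj⟩ := ((hlim i).and (hlim j)).exists
    exact (hv n).1 (by rw [hni, hnj, hij])
  · obtain ⟨n, hn⟩ := ((finite_Iic k).eventually_all.2 fun i _ => hlim i).exists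
    obtain ⟨j, hj, hjy⟩ := (hv n).2 k y (by rwa [hn k (mem_Iic.2 le_rfl)])
    exact ⟨j, hj, by rw [← hn j (mem_Iic.2 hj.le), hjy]⟩

section SeqDist

variable {Z : Type*}

theorem seqDist_nonneg (a b : ℕ → Z) : 0 ≤ seqDist a b :=
  tsum_nonneg fun i => by positivity

theorem seqDist_le_of_forall_lt_eq {a b : ℕ → Z} {m : ℕ} (h : ∀ i < m, a i = b i) :
    seqDist a b ≤ (2 : ℝ)⁻¹ ^ m := by
  set g : ℕ → ℝ := fun i => if m ≤ i then (2 : ℝ)⁻¹ ^ i else 0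
  have hg : Summable g :=
    (summable_geometric_of_lt_one (r := (2 : ℝ)⁻¹) (by norm_num) (by norm_num)).of_nonneg_of_le
      (fun i => by dsimp only [g]; split_ifs <;> positivity)
      fun i => by dsimp only [g]; split_ifs <;> first | exact le_rfl | positivity
  have hle : ∀ i, (2 : ℝ)⁻¹ ^ (i + 1) * (if a i = b i then 0 else 1) ≤ 2⁻¹ * g i := by
    intro i
    by_cases hi : m ≤ i
    · simp only [g, if_pos hi, pow_succ]
      split_ifs <;> nlinarith [pow_pos (by norm_num : (0 : ℝ) < 2⁻¹) i]
    · simp [g, hi, h i (not_le.1 hi)]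
  calc seqDist a b ≤ ∑' i, 2⁻¹ * g i :=
        Summable.tsum_le_tsum hle ((hg.mul_left _).of_nonneg_of_le (fun i => by positivity) hle)
          (hg.mul_left _)
    _ = (2 : ℝ)⁻¹ ^ m := by rw [tsum_mul_left, tsum_geometric_inv_two_ge]; ring

theorem tendsto_seqDist_zero_of_eventually_eq {ι : Type*} {l : Filter ι} {v : ι → ℕ → Z}
    {ω : ℕ → Z} (hlim : ∀ k, ∀ᶠ n in l, v n k = ω k) :
    Tendsto (fun n => seqDist (v n) ω) l (𝓝 0) := by
  refine tendsto_order.2 ⟨fun a ha => .of_forall fun n => ha.trans_le (seqDist_nonneg _ _),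
    fun ε hε => ?_⟩
  obtain ⟨m, hm⟩ := exists_pow_lt_of_lt_one hε (by norm_num : (2 : ℝ)⁻¹ < 1)
  filter_upwards [(finite_Iio m).eventually_all.2 fun i _ => hlim i] with n hn
  exact (seqDist_le_of_forall_lt_eq hn).trans_lt hm

end SeqDist

theorem stmt15_general (Z : Type*) [PartialOrder Z]
    (hmin : ∀ A : Set Z, IsLowerSet A → A.Finite →
      {b : Z | b ∉ A ∧ ∀ y ∉ A, ¬ y < b}.Finite)
    (u : ℕ → {ω : ℕ → Z // MemOmegaP ω}) :
    ∃ ω : {ω : ℕ → Z // MemOmegaP ω}, ∃ φ : ℕ → ℕ, StrictMono φ ∧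
      Filter.Tendsto (fun n => seqDist ((u (φ n)) : ℕ → Z) (ω : ℕ → Z))
        Filter.atTop (nhds 0) := by
  obtain ⟨ω, φ, hφ, hlim⟩ := exists_subseq_eventually_eq (finite_values hmin)
    (fun n => (u n : ℕ → Z)) fun n k => ⟨u n, (u n).2, rfl⟩
  exact ⟨⟨ω, memOmegaP_of_eventually_eq (fun n => (u (φ n)).2) hlim⟩, φ, hφ,
    tendsto_seqDist_zero_of_eventually_eq hlim⟩

/-- If `P` is a causal set such that `P ∖ A` has finitely many minimal elements for every
finite down-set `A`, then `Ω^P` is sequentially compact for the metric `seqDist`: every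
sequence in `Ω^P` has a subsequence converging to an element of `Ω^P`. -/
theorem stmt15 (Z : Type*) [PartialOrder Z] [Countable Z] [Infinite Z]
    (hD : ∀ z : Z, {y : Z | y < z}.Finite)
    (hmin : ∀ A : Set Z, IsLowerSet A → A.Finite →
      {b : Z | b ∉ A ∧ ∀ y ∉ A, ¬ y < b}.Finite)
    (u : ℕ → {ω : ℕ → Z // MemOmegaP ω}) :
    ∃ ω : {ω : ℕ → Z // MemOmegaP ω}, ∃ φ : ℕ → ℕ, StrictMono φ ∧
      Filter.Tendsto (fun n => seqDist ((u (φ n)) : ℕ → Z) (ω : ℕ → Z))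
        Filter.atTop (nhds 0) :=
  stmt15_general Z hmin u
end

section
/- Let P = (Z,<) be a causal set with a finite down-set A such that P ∖ A has infinitely many minimal elements. Then the space Ω^P with metric d(ω,ω') = ∑_i 2^{−i} 𝟙(ω_i ≠ ω'_i) is not sequentially compact: there is a sequence of elements of Ω^P that is pairwise at distance exactly 2^{−k} (where k = |A|) and hence has no convergent subsequence. -/
open scoped Classical

/-!
List the finite down-set `A` along a linear extension `a₁ ⋯ a_k` and enumerate distinct minimal
elements `b₀, b₁, …` of `P ∖ A`. The sequences `ωⁱ = a₁ ⋯ a_k bᵢ bᵢ₊₁ ⋯` lie in `Ω^P`, agree in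
their first `k` places and differ in every later one, so they are pairwise at distance `2⁻ᵏ`; by
the triangle inequality no subsequence of them converges.
-/

section seqDist

variable {Z : Type*}

lemma summable_seqDist_terms (x y : ℕ → Z) :
    Summable fun i : ℕ => (2 : ℝ)⁻¹ ^ (i + 1) * (if x i = y i then 0 else 1) := by
  refine Summable.of_nonneg_of_le (fun i => by positivity) (fun i => ?_)
    (summable_geometric_of_lt_one (by norm_num) (by norm_num : (2 : ℝ)⁻¹ < 1))
  calc (2 : ℝ)⁻¹ ^ (i + 1) * (if x i = y i then 0 else 1)
      ≤ (2 : ℝ)⁻¹ ^ (i + 1) := by split_ifs <;> simp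
    _ ≤ (2 : ℝ)⁻¹ ^ i := pow_le_pow_of_le_one (by norm_num) (by norm_num) i.le_succ

lemma seqDist_comm (x y : ℕ → Z) : seqDist x y = seqDist y x := by
  simp only [seqDist, eq_comm]

lemma seqDist_triangle (x y z : ℕ → Z) : seqDist x z ≤ seqDist x y + seqDist y z := by
  rw [seqDist, seqDist, seqDist,
    ← (summable_seqDist_terms x y).tsum_add (summable_seqDist_terms y z)]
  refine (summable_seqDist_terms x z).tsum_le_tsum (fun i => ?_)
    ((summable_seqDist_terms x y).add (summable_seqDist_terms y z))
  rw [← mul_add]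
  refine mul_le_mul_of_nonneg_left ?_ (by positivity)
  split_ifs <;> simp_all

lemma seqDist_eq_inv_two_pow {x y : ℕ → Z} {k : ℕ} (hlt : ∀ n < k, x n = y n)
    (hge : ∀ n, k ≤ n → x n ≠ y n) : seqDist x y = (2 : ℝ)⁻¹ ^ k := by
  rw [seqDist, ← (summable_seqDist_terms x y).sum_add_tsum_nat_add k,
    Finset.sum_eq_zero fun n hn => by simp [hlt n (Finset.mem_range.mp hn)], zero_add]
  have htail : ∀ i : ℕ, (2 : ℝ)⁻¹ ^ (i + k + 1) * (if x (i + k) = y (i + k) then 0 else 1)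
      = (2 : ℝ)⁻¹ ^ (k + 1) * (2 : ℝ)⁻¹ ^ i := fun i => by
    rw [if_neg (hge (i + k) (Nat.le_add_left k i)), mul_one]
    ring
  rw [tsum_congr htail, tsum_mul_left, tsum_geometric_of_lt_one (by norm_num) (by norm_num)]
  ring

lemma not_tendsto_seqDist_of_separated {u : ℕ → ℕ → Z} {δ : ℝ} (hδ : 0 < δ)
    (hu : Pairwise fun i j => δ ≤ seqDist (u i) (u j)) (ω : ℕ → Z) {φ : ℕ → ℕ}
    (hφ : StrictMono φ) :
    ¬ Filter.Tendsto (fun n => seqDist (u (φ n)) ω) Filter.atTop (nhds 0) := by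
  intro htend
  obtain ⟨N, hN⟩ := Filter.eventually_atTop.mp
    (htend.eventually (gt_mem_nhds (half_pos hδ)))
  have hsep := hu (hφ.injective.ne (Nat.succ_ne_self N).symm)
  have htri := seqDist_triangle (u (φ N)) ω (u (φ (N + 1)))
  rw [seqDist_comm ω] at htri
  linarith [hN N le_rfl, hN (N + 1) N.le_succ]

end seqDist

section seqAppend

variable {Z : Type*} {k : ℕ}

def seqAppend (a : Fin k → Z) (b : ℕ → Z) (n : ℕ) : Z :=
  if h : n < k then a ⟨n, h⟩ else b (n - k)

lemma seqAppend_of_lt (a : Fin k → Z) (b : ℕ → Z) {n : ℕ} (h : n < k) :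
    seqAppend a b n = a ⟨n, h⟩ := dif_pos h

lemma seqAppend_of_le (a : Fin k → Z) (b : ℕ → Z) {n : ℕ} (h : k ≤ n) :
    seqAppend a b n = b (n - k) := dif_neg h.not_gt

lemma seqDist_seqAppend (a : Fin k → Z) {b b' : ℕ → Z} (hbb' : ∀ n, b n ≠ b' n) :
    seqDist (seqAppend a b) (seqAppend a b') = (2 : ℝ)⁻¹ ^ k :=
  seqDist_eq_inv_two_pow (fun n hn => by rw [seqAppend_of_lt _ _ hn, seqAppend_of_lt _ _ hn])
    fun n hn => by rw [seqAppend_of_le _ _ hn, seqAppend_of_le _ _ hn]; exact hbb' _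

lemma memOmegaP_seqAppend [PartialOrder Z] {A : Set Z} (hA : IsLowerSet A) {a : Fin k → Z}
    (ha_inj : Function.Injective a) (ha_range : Set.range a = A)
    (ha_ext : ∀ i j, a i < a j → i < j) {b : ℕ → Z} (hb_inj : Function.Injective b)
    (hb_min : ∀ n, b n ∉ A ∧ ∀ y ∉ A, ¬ y < b n) :
    MemOmegaP (seqAppend a b) := by
  have ha_mem : ∀ i, a i ∈ A := fun i => ha_range ▸ Set.mem_range_self i
  have hab : ∀ i n, a i ≠ b n := fun i n h => (hb_min n).1 (h ▸ ha_mem i)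
  constructor
  · intro m n hmn
    rcases lt_or_ge m k with hm | hm <;> rcases lt_or_ge n k with hn | hn
    · rw [seqAppend_of_lt _ _ hm, seqAppend_of_lt _ _ hn] at hmn
      exact Fin.val_eq_of_eq (ha_inj hmn)
    · rw [seqAppend_of_lt _ _ hm, seqAppend_of_le _ _ hn] at hmn
      exact absurd hmn (hab _ _)
    · rw [seqAppend_of_le _ _ hm, seqAppend_of_lt _ _ hn] at hmn
      exact absurd hmn.symm (hab _ _)
    · rw [seqAppend_of_le _ _ hm, seqAppend_of_le _ _ hn] at hmn
      have := hb_inj hmn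
      omega
  · intro n y hy
    have hyA : y ∈ A := by
      rcases lt_or_ge n k with hn | hn
      · rw [seqAppend_of_lt _ _ hn] at hy
        exact hA hy.le (ha_mem _)
      · rw [seqAppend_of_le _ _ hn] at hy
        exact not_not.mp fun hyA => (hb_min _).2 y hyA hy
    obtain ⟨j, rfl⟩ := ha_range ▸ hyA
    refine ⟨j, ?_, seqAppend_of_lt _ _ j.isLt⟩
    rcases lt_or_ge n k with hn | hn
    · rw [seqAppend_of_lt _ _ hn] at hy
      exact ha_ext j ⟨n, hn⟩ hy
    · exact j.isLt.trans_le hn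

end seqAppend

lemma Finset.exists_linearExtension_enum {Z : Type*} [PartialOrder Z] (s : Finset Z) :
    ∃ a : Fin s.card → Z, Function.Injective a ∧ Set.range a = s ∧
      ∀ i j, a i < a j → i < j := by
  let t : Finset (LinearExtension Z) := s
  let f : Fin s.card ↪o LinearExtension Z := t.orderEmbOfFin rfl
  let a : Fin s.card → Z := fun i => f i
  refine ⟨a, f.injective, t.range_orderEmbOfFin rfl, fun i j hij => f.lt_iff_lt.mp ?_⟩
  have hle : toLinearExtension (a i) ≤ toLinearExtension (a j) :=
    toLinearExtension.monotone hij.le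
  exact lt_of_le_of_ne hle hij.ne

theorem stmt16_general (Z : Type*) [PartialOrder Z]
    (A : Set Z) (hA : IsLowerSet A) (hAfin : A.Finite)
    (hinf : {b : Z | b ∉ A ∧ ∀ y ∉ A, ¬ y < b}.Infinite) :
    ∃ u : ℕ → {ω : ℕ → Z // MemOmegaP ω},
      (∀ i j : ℕ, i ≠ j →
        seqDist ((u i) : ℕ → Z) ((u j) : ℕ → Z) = (2 : ℝ)⁻¹ ^ hAfin.toFinset.card) ∧
      ¬ ∃ ω : {ω : ℕ → Z // MemOmegaP ω}, ∃ φ : ℕ → ℕ, StrictMono φ ∧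
        Filter.Tendsto (fun n => seqDist ((u (φ n)) : ℕ → Z) (ω : ℕ → Z))
          Filter.atTop (nhds 0) := by
  obtain ⟨a, ha_inj, ha_range, ha_ext⟩ := hAfin.toFinset.exists_linearExtension_enum
  rw [hAfin.coe_toFinset] at ha_range
  let b : ℕ → Z := fun n => hinf.natEmbedding _ n
  have hb_inj : Function.Injective b := fun m n h =>
    (hinf.natEmbedding _).injective (Subtype.ext h)
  have hb_shift_inj : ∀ i, Function.Injective fun n => b (n + i) := fun i m n h =>
    Nat.add_right_cancel (hb_inj h)
  let u : ℕ → {ω : ℕ → Z // MemOmegaP ω} := fun i =>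
    ⟨seqAppend a fun n => b (n + i), memOmegaP_seqAppend hA ha_inj ha_range ha_ext
      (hb_shift_inj i) fun n => (hinf.natEmbedding _ (n + i)).2⟩
  have hdist : ∀ i j, i ≠ j → seqDist (u i : ℕ → Z) (u j) = (2 : ℝ)⁻¹ ^ hAfin.toFinset.card :=
    fun i j hij => seqDist_seqAppend a (b := fun n => b (n + i)) (b' := fun n => b (n + j))
      fun n h => hij (Nat.add_left_cancel (hb_inj h))
  refine ⟨u, hdist, fun ⟨ω, φ, hφ, htend⟩ => ?_⟩
  exact not_tendsto_seqDist_of_separated (by positivity) (fun i j hij => (hdist i j hij).ge)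
    ω hφ htend

/-- If `P` is a causal set having a finite down-set `A` of size `k` such that `P ∖ A` has
infinitely many minimal elements, then `Ω^P` is not sequentially compact: there is a
sequence in `Ω^P` whose members are pairwise at distance exactly `2^{-k}`, and which has
no subsequence converging to an element of `Ω^P`. -/
theorem stmt16 (Z : Type*) [PartialOrder Z] [Countable Z] [Infinite Z]
    (hD : ∀ z : Z, {y : Z | y < z}.Finite)
    (A : Set Z) (hA : IsLowerSet A) (hAfin : A.Finite)
    (hinf : {b : Z | b ∉ A ∧ ∀ y ∉ A, ¬ y < b}.Infinite) :
    ∃ u : ℕ → {ω : ℕ → Z // MemOmegaP ω},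
      (∀ i j : ℕ, i ≠ j →
        seqDist ((u i) : ℕ → Z) ((u j) : ℕ → Z) = (2 : ℝ)⁻¹ ^ hAfin.toFinset.card) ∧
      ¬ ∃ ω : {ω : ℕ → Z // MemOmegaP ω}, ∃ φ : ℕ → ℕ, StrictMono φ ∧
        Filter.Tendsto (fun n => seqDist ((u (φ n)) : ℕ → Z) (ω : ℕ → Z))
          Filter.atTop (nhds 0) :=
  stmt16_general Z A hA hAfin hinf
end

section
/- Let P = (Z,<) be an upward-branching forest with no maximal element (for every x there exists y > x), with a nonempty countable set of minimal elements. Then there exists a function f: Z → (0,∞) such that f(x) = ∑_{y covering x} f(y) for every x ∈ Z, and the sum of f(x) over all minimal elements x equals 1. -/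
/-!
Choose positive weights `s` so that the weights of the upper covers of every element, and the
weights of the minimal elements, each sum to `1`; this is possible because each of these families
is countable and nonempty, and together they partition the forest. Then `f y`, the product of the
weights along the finite chain below `y`, is the required flow: if `x ⋖ y` then
`f y = f x * s y`, and summing over the covers `y` of `x` gives `f x`.
-/

open Finset

lemma exists_pos_hasSum_one (α : Type*) [Countable α] [Nonempty α] :
    ∃ w : α → ℝ, (∀ a, 0 < w a) ∧ HasSum w 1 := by
  have := Encodable.ofCountable α
  obtain ⟨ε, hε, c, hc, -⟩ := posSumOfEncodable one_pos α
  have hc₀ : 0 < c := hasSum_lt (fun a => (hε a).le) (hε (Classical.arbitrary α)) hasSum_zero hc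
  exact ⟨fun a => ε a / c, fun a => div_pos (hε a) hc₀, by
    simpa [div_self hc₀.ne'] using hc.div_const c⟩

lemma exists_pos_hasSum_one_on_fibers {α β : Type*} [Countable α] {p : α → β}
    (hp : Function.Surjective p) :
    ∃ s : α → ℝ, (∀ a, 0 < s a) ∧ ∀ b, HasSum (fun a : {a // p a = b} => s a) 1 := by
  have (b : β) : Nonempty {a // p a = b} := let ⟨a, ha⟩ := hp b; ⟨⟨a, ha⟩⟩
  choose w hw_pos hw_sum using fun b => exists_pos_hasSum_one {a // p a = b}
  refine ⟨fun a => w (p a) ⟨a, rfl⟩, fun a => hw_pos _ _, fun b => ?_⟩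
  convert hw_sum b with ⟨a, rfl⟩

section Forest

variable {Z : Type*} [PartialOrder Z] {x x' y : Z}

lemma CovBy.eq_of_isChain_Iic (hc : IsChain (· ≤ ·) (Set.Iic y)) (h : x ⋖ y) (h' : x' ⋖ y) :
    x = x' := by
  by_contra hne
  rcases hc h.le h'.le hne with hle | hle
  · exact h.2 (hle.lt_of_ne hne) h'.lt
  · exact h'.2 (hle.lt_of_ne' hne) h.lt

lemma CovBy.Iic_eq_insert_of_isChain (hc : IsChain (· ≤ ·) (Set.Iic y)) (h : x ⋖ y) :
    Set.Iic y = insert y (Set.Iic x) := by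
  ext z
  refine ⟨fun hz => ?_, ?_⟩
  · rcases eq_or_ne z y with rfl | hzy
    · exact Set.mem_insert _ _
    · rcases eq_or_ne z x with rfl | hzx
      · exact Set.mem_insert_of_mem _ le_rfl
      · rcases hc hz h.le hzx with hle | hle
        · exact Set.mem_insert_of_mem _ hle
        · exact absurd ((Set.mem_Iic.1 hz).lt_of_ne hzy) (h.2 (hle.lt_of_ne' hzx))
  · rintro (rfl | hz)
    exacts [le_rfl, hz.trans h.le]

lemma exists_covBy_of_not_isMin [IsStronglyCoatomic Z] (hy : ¬ IsMin y) : ∃ x, x ⋖ y :=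
  let ⟨_, hzy⟩ := not_isMin_iff.1 hy
  let ⟨x, _, hx⟩ := exists_le_covBy_of_lt hzy
  ⟨x, hx⟩

noncomputable def lowerCover (y : Z) : Option Z :=
  open Classical in if h : ∃ x, x ⋖ y then some h.choose else none

lemma lowerCover_eq_some_iff (hc : IsChain (· ≤ ·) (Set.Iic y)) :
    lowerCover y = some x ↔ x ⋖ y := by
  unfold lowerCover
  split_ifs with h
  · exact ⟨fun hx => Option.some_injective _ hx ▸ h.choose_spec,
      fun hx => congrArg some (h.choose_spec.eq_of_isChain_Iic hc hx)⟩
  · simpa using fun hx => h ⟨x, hx⟩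

lemma lowerCover_eq_none_iff [IsStronglyCoatomic Z] : lowerCover y = none ↔ IsMin y := by
  unfold lowerCover
  split_ifs with h
  · simpa using fun hy : IsMin y => h.elim fun x hx => hy.not_lt hx.lt
  · simpa using not_imp_comm.1 exists_covBy_of_not_isMin h

lemma lowerCover_surjective [IsStronglyAtomic Z] [IsStronglyCoatomic Z] [NoMaxOrder Z]
    (hc : ∀ y : Z, IsChain (· ≤ ·) (Set.Iic y)) (hmin : ∃ y : Z, IsMin y) :
    Function.Surjective (lowerCover (Z := Z)) := by
  rintro (_ | x)
  · obtain ⟨y, hy⟩ := hmin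
    exact ⟨y, lowerCover_eq_none_iff.2 hy⟩
  · obtain ⟨y, hxy, -⟩ := exists_covBy_le_of_lt (exists_gt x).choose_spec
    exact ⟨y, (lowerCover_eq_some_iff (hc y)).2 hxy⟩

lemma exists_pos_hasSum_one_covBy_isMin [Countable Z] [IsStronglyAtomic Z] [IsStronglyCoatomic Z]
    [NoMaxOrder Z] (hc : ∀ y : Z, IsChain (· ≤ ·) (Set.Iic y)) (hmin : ∃ y : Z, IsMin y) :
    ∃ s : Z → ℝ, (∀ y, 0 < s y) ∧ (∀ x : Z, HasSum (fun y : {y // x ⋖ y} => s y) 1) ∧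
      HasSum (fun y : {y : Z // IsMin y} => s y) 1 := by
  obtain ⟨s, hs_pos, hs_sum⟩ := exists_pos_hasSum_one_on_fibers (lowerCover_surjective hc hmin)
  refine ⟨s, hs_pos, fun x => ?_, ?_⟩
  · exact (Equiv.subtypeEquivRight fun y => (lowerCover_eq_some_iff (hc y)).symm).hasSum_iff.2
      (hs_sum (some x))
  · exact (Equiv.subtypeEquivRight fun _ => lowerCover_eq_none_iff.symm).hasSum_iff.2
      (hs_sum none)

variable [LocallyFiniteOrderBot Z] {s : Z → ℝ}

noncomputable def pathProd (s : Z → ℝ) (y : Z) : ℝ := ∏ z ∈ Finset.Iic y, s z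

lemma pathProd_pos (hs : ∀ y, 0 < s y) (y : Z) : 0 < pathProd s y :=
  prod_pos fun z _ => hs z

lemma pathProd_of_isMin (hy : IsMin y) : pathProd s y = s y := by
  have hIic : Finset.Iic y = {y} := Finset.coe_injective (by simpa using hy.Iic_eq)
  rw [pathProd, hIic, prod_singleton]

lemma pathProd_of_covBy (hc : IsChain (· ≤ ·) (Set.Iic y)) (h : x ⋖ y) :
    pathProd s y = pathProd s x * s y := by
  classical
  have hIic : Finset.Iic y = insert y (Finset.Iic x) :=
    Finset.coe_injective (by simpa using h.Iic_eq_insert_of_isChain hc)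
  rw [pathProd, pathProd, hIic, prod_insert fun hyx => h.lt.not_ge (Finset.mem_Iic.1 hyx),
    mul_comm]

lemma hasSum_pathProd_covBy (hc : ∀ y : Z, IsChain (· ≤ ·) (Set.Iic y))
    (hs : HasSum (fun y : {y // x ⋖ y} => s y) 1) :
    HasSum (fun y : {y // x ⋖ y} => pathProd s y) (pathProd s x) := by
  simpa [pathProd_of_covBy (hc _) (Subtype.prop _)] using hs.mul_left (pathProd s x)

lemma hasSum_pathProd_isMin (hs : HasSum (fun y : {y : Z // IsMin y} => s y) 1) :
    HasSum (fun y : {y : Z // IsMin y} => pathProd s y) 1 := by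
  simpa [pathProd_of_isMin (Subtype.prop _)] using hs

end Forest

/-- In an upward-branching forest (a countable poset in which every `D[x]` is a finite
chain) with no maximal element and a nonempty set of minimal elements, there is a flow of
value `1`: a strictly positive function `f` with `f(x) = ∑_{y ⋖-covering x} f(y)` for all
`x`, whose sum over the minimal elements is `1`. -/
theorem stmt18 (Z : Type*) [PartialOrder Z] [Countable Z]
    (hfin : ∀ x : Z, {y : Z | y ≤ x}.Finite)
    (hchain : ∀ x : Z, IsChain (· ≤ ·) {y : Z | y ≤ x})
    (hnomax : ∀ x : Z, ∃ y : Z, x < y)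
    (hmin : {x : Z | ∀ y : Z, ¬ y < x}.Nonempty) :
    ∃ f : Z → ℝ, (∀ x : Z, 0 < f x) ∧
      (∀ x : Z, HasSum (fun y : {y : Z // x ⋖ y} => f y) (f x)) ∧
      HasSum (fun x : {x : Z // ∀ y : Z, ¬ y < x} => f x) 1 := by
  classical
  let : LocallyFiniteOrder Z :=
    .ofFiniteIcc fun _ b => (hfin b).subset Set.Icc_subset_Iic_self
  let : LocallyFiniteOrderBot Z :=
    .ofIic Z (fun y => (hfin y).toFinset) fun _ _ => Set.Finite.mem_toFinset _
  have : NoMaxOrder Z := ⟨hnomax⟩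
  obtain ⟨s, hs_pos, hs_cov, hs_min⟩ :=
    exists_pos_hasSum_one_covBy_isMin hchain (hmin.imp fun _ => isMin_iff_forall_not_lt.2)
  refine ⟨pathProd s, pathProd_pos hs_pos, fun x => hasSum_pathProd_covBy hchain (hs_cov x), ?_⟩
  exact (Equiv.subtypeEquivRight fun _ => isMin_iff_forall_not_lt).hasSum_iff.1
    (hasSum_pathProd_isMin hs_min)
end
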